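/- (Theorem: 𝒯 is unitary.) Suppose the tuple {(n0,n1,n2), B, B_I} is admissible. Then for all x, y ∈ L2^{n_x}, ⟨𝒯x, 𝒯y⟩_X = ⟨x, y⟩_{L2}, where ⟨u,w⟩_X := Σ_{i=0}^2 ⟨∂_s^i u_i, ∂_s^i w_i⟩_{L2} for u, w ∈ X. -/

import Mathlib

open MeasureTheory Matrix Topology Filter

noncomputable section

namespace PIEpaper

/-- The Lebesgue measure restricted to the interval `[a,b]`. -/
def μab (a b : ℝ) : Measure ℝ := volume.restrict (Set.Icc a b)

/-- A matrix-valued function on `[a,b]` is essentially bounded (belongs to `L∞`). -/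
def EssBddMat {ι κ : Type*} (a b : ℝ) (M : ℝ → Matrix ι κ ℝ) : Prop :=
  Measurable (fun s i j => M s i j) ∧ ∃ C : ℝ, ∀ᵐ s ∂(μab a b), ∀ i j, |M s i j| ≤ C

/-- A matrix-valued function on `[a,b]` is (entrywise) square integrable. -/
def SqIntMat {ι κ : Type*} (a b : ℝ) (M : ℝ → Matrix ι κ ℝ) : Prop :=
  Measurable (fun s i j => M s i j) ∧ ∀ i j, MemLp (fun s => M s i j) 2 (μab a b)

/-- A matrix-valued kernel `R : [a,b]² → ℝ^{ι×κ}` is separable if `R(s,θ) = F(s)ᵀ G(θ)`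
for essentially bounded `F, G`. -/
def SepMat {ι κ : Type*} (a b : ℝ) (R : ℝ → ℝ → Matrix ι κ ℝ) : Prop :=
  ∃ (r : ℕ) (F : ℝ → Matrix (Fin r) ι ℝ) (G : ℝ → Matrix (Fin r) κ ℝ),
    EssBddMat a b F ∧ EssBddMat a b G ∧
    ∀ s ∈ Set.Icc a b, ∀ θ ∈ Set.Icc a b, R s θ = (F s)ᵀ * G θ

variable (a b : ℝ) (n0 n1 n2 : ℕ)

/-- Index type for the PDE state blocks `(x0, x1, x2)`, and likewise for the
fundamental state `Dx = (x0, ∂ₛx1, ∂ₛ²x2)`; it has `n_x = n0+n1+n2` elements. -/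
abbrev Ix := Fin n0 ⊕ (Fin n1 ⊕ Fin n2)

/-- Index type for the boundary core `x_c = (x1, x2, ∂ₛx2)`; it has `n_S = n1+2n2` elements. -/
abbrev Ic := Fin n1 ⊕ (Fin n2 ⊕ Fin n2)

/-- Index type for the first two block rows `(n1- and n2-sized)`. -/
abbrev I12 := Fin n1 ⊕ Fin n2

/-- Index type for the full derivative vector
`x_D = (x0, x1, x2, ∂ₛx1, ∂ₛx2, ∂ₛ²x2)` (with `n_x + n_S` elements), organized into the
fundamental-state block `(x0, ∂ₛx1, ∂ₛ²x2)` (left) and the core block `(x1, x2, ∂ₛx2)` (right). -/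
abbrev ID := Ix n0 n1 n2 ⊕ Ic n1 n2

/-- An element of `W^n = W_0^{n0} × W_1^{n1} × W_2^{n2}` on `[a,b]`, encoded through its
components together with their (weak) derivatives: `x1 ∈ W_1` and `x2 ∈ W_2` are identified
with their absolutely continuous representatives, i.e. they satisfy the fundamental theorem
of calculus with square-integrable derivatives `dx1 = ∂ₛx1`, `dx2 = ∂ₛx2`, `ddx2 = ∂ₛ²x2`. -/
structure State where
  x0 : ℝ → Fin n0 → ℝ
  x1 : ℝ → Fin n1 → ℝ
  dx1 : ℝ → Fin n1 → ℝ
  x2 : ℝ → Fin n2 → ℝ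
  dx2 : ℝ → Fin n2 → ℝ
  ddx2 : ℝ → Fin n2 → ℝ
  memLp_x0 : MemLp x0 2 (μab a b)
  memLp_dx1 : MemLp dx1 2 (μab a b)
  memLp_dx2 : MemLp dx2 2 (μab a b)
  memLp_ddx2 : MemLp ddx2 2 (μab a b)
  ftc_x1 : ∀ s ∈ Set.Icc a b, ∀ i, x1 s i = x1 a i + ∫ θ in a..s, dx1 θ i
  ftc_x2 : ∀ s ∈ Set.Icc a b, ∀ i, x2 s i = x2 a i + ∫ θ in a..s, dx2 θ i
  ftc_dx2 : ∀ s ∈ Set.Icc a b, ∀ i, dx2 s i = dx2 a i + ∫ θ in a..s, ddx2 θ i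

variable {a b n0 n1 n2}

/-- The PDE state `x = (x0, x1, x2)` as an `ℝ^{n_x}`-valued function. -/
def xfun (x : State a b n0 n1 n2) (s : ℝ) : Ix n0 n1 n2 → ℝ :=
  Sum.elim (x.x0 s) (Sum.elim (x.x1 s) (x.x2 s))

/-- The fundamental state `Dx = (x0, ∂ₛx1, ∂ₛ²x2)` as an `ℝ^{n_x}`-valued function. -/
def Dx (x : State a b n0 n1 n2) (s : ℝ) : Ix n0 n1 n2 → ℝ :=
  Sum.elim (x.x0 s) (Sum.elim (x.dx1 s) (x.ddx2 s))

/-- The boundary core `x_c = (x1, x2, ∂ₛx2)` as an `ℝ^{n_S}`-valued function. -/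
def xc (x : State a b n0 n1 n2) (s : ℝ) : Ic n1 n2 → ℝ :=
  Sum.elim (x.x1 s) (Sum.elim (x.x2 s) (x.dx2 s))

/-- The full derivative vector `x_D = (x0, x1, x2, ∂ₛx1, ∂ₛx2, ∂ₛ²x2)`. -/
def xD (x : State a b n0 n1 n2) (s : ℝ) : ID n0 n1 n2 → ℝ :=
  Sum.elim (Dx x s) (xc x s)

/-- The boundary-value vector `x_b = (x_c(a), x_c(b)) ∈ ℝ^{2 n_S}`. -/
def xb (x : State a b n0 n1 n2) : (Ic n1 n2 ⊕ Ic n1 n2) → ℝ :=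
  Sum.elim (xc x a) (xc x b)

variable (a b n0 n1 n2)

/-- `T(η) = [[I,0,0],[0,I,ηI],[0,0,I]] ∈ ℝ^{n_S × n_S}`. -/
def Tmat (η : ℝ) : Matrix (Ic n1 n2) (Ic n1 n2) ℝ :=
  Matrix.of fun i j =>
    match i, j with
    | .inl i, .inl j => if i = j then (1:ℝ) else 0
    | .inr (.inl i), .inr (.inl j) => if i = j then (1:ℝ) else 0
    | .inr (.inl i), .inr (.inr j) => if i = j then η else 0
    | .inr (.inr i), .inr (.inr j) => if i = j then (1:ℝ) else 0
    | _, _ => 0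

/-- `Q(η) = [[0,I_{n1},0],[0,0,ηI_{n2}],[0,0,I_{n2}]] ∈ ℝ^{n_S × n_x}`. -/
def Qmat (η : ℝ) : Matrix (Ic n1 n2) (Ix n0 n1 n2) ℝ :=
  Matrix.of fun i j =>
    match i, j with
    | .inl i, .inr (.inl j) => if i = j then (1:ℝ) else 0
    | .inr (.inl i), .inr (.inr j) => if i = j then η else 0
    | .inr (.inr i), .inr (.inr j) => if i = j then (1:ℝ) else 0
    | _, _ => 0

/-- Embedding of the first two block rows into the `x_c` index. -/
def emb12 : I12 n1 n2 → Ic n1 n2 := Sum.elim Sum.inl (fun k => Sum.inr (Sum.inl k))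

/-- `T1(η)`: the first two block rows of `T(η)`. -/
def T1mat (η : ℝ) : Matrix (I12 n1 n2) (Ic n1 n2) ℝ :=
  Matrix.of fun i j => Tmat n1 n2 η (emb12 n1 n2 i) j

/-- `Q1(η)`: the first two block rows of `Q(η)`. -/
def Q1mat (η : ℝ) : Matrix (I12 n1 n2) (Ix n0 n1 n2) ℝ :=
  Matrix.of fun i j => Qmat n0 n1 n2 η (emb12 n1 n2 i) j

/-- `U1 ∈ ℝ^{(n_x+n_S) × n_x}`: the 0-1 matrix placing `(v0,v1,v2)` into the
`x0`, `∂ₛx1` and `∂ₛ²x2` blocks of the `x_D` ordering. -/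
def U1 : Matrix (ID n0 n1 n2) (Ix n0 n1 n2) ℝ :=
  Matrix.of fun i j =>
    match i with
    | .inl i' => if i' = j then (1:ℝ) else 0
    | .inr _ => 0

/-- `U2 ∈ ℝ^{(n_x+n_S) × n_S}`: the 0-1 matrix placing `(w1,w2,w3)` into the
`x1`, `x2` and `∂ₛx2` blocks of the `x_D` ordering. -/
def U2 : Matrix (ID n0 n1 n2) (Ic n1 n2) ℝ :=
  Matrix.of fun i j =>
    match i with
    | .inl _ => (0:ℝ)
    | .inr i' => if i' = j then 1 else 0

/-- The stacked matrix `[T(0); T(b-a)] ∈ ℝ^{2n_S × n_S}`. -/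
def Tstack : Matrix (Ic n1 n2 ⊕ Ic n1 n2) (Ic n1 n2) ℝ :=
  Matrix.of fun i j =>
    match i with
    | .inl i' => Tmat n1 n2 0 i' j
    | .inr i' => Tmat n1 n2 (b - a) i' j

/-- The stacked matrix `[0_{n_S×n_x}; Q(η)] ∈ ℝ^{2n_S × n_x}`. -/
def Qstack (η : ℝ) : Matrix (Ic n1 n2 ⊕ Ic n1 n2) (Ix n0 n1 n2) ℝ :=
  Matrix.of fun i j =>
    match i with
    | .inl _ => (0:ℝ)
    | .inr i' => Qmat n0 n1 n2 η i' j

variable (B : Matrix (Ic n1 n2) (Ic n1 n2 ⊕ Ic n1 n2) ℝ)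
variable (B_I : ℝ → Matrix (Ic n1 n2) (ID n0 n1 n2) ℝ)

/-- `B_T = B [T(0); T(b−a)] − ∫_a^b B_I(s) U2 T(s−a) ds`. -/
def BT : Matrix (Ic n1 n2) (Ic n1 n2) ℝ :=
  B * Tstack a b n1 n2 -
    Matrix.of fun i j => ∫ s in a..b, (B_I s * U2 n0 n1 n2 * Tmat n1 n2 (s - a)) i j

/-- Admissibility of the boundary conditions: `B_T` is invertible. -/
def Admissible : Prop := IsUnit (BT a b n0 n1 n2 B B_I).det

/-- `B_Q(s) = B_T⁻¹ ( B_I(s) U1 − B [0; Q(b−s)] + ∫_s^b B_I(θ) U2 Q(θ−s) dθ )`. -/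
def BQ (s : ℝ) : Matrix (Ic n1 n2) (Ix n0 n1 n2) ℝ :=
  (BT a b n0 n1 n2 B B_I)⁻¹ *
    (B_I s * U1 n0 n1 n2 - B * Qstack n0 n1 n2 (b - s) +
      Matrix.of fun i j => ∫ θ in s..b, (B_I θ * U2 n0 n1 n2 * Qmat n0 n1 n2 (θ - s)) i j)

/-- The boundary condition `B x_b = ∫_a^b B_I(s) x_D(s) ds` defining the set `X`;
  together with the regularity encoded in `State` this says `x ∈ X`. -/
def BCholds (x : State a b n0 n1 n2) : Prop :=
  ∀ i, B.mulVec (xb x) i = ∫ s in a..b, (B_I s).mulVec (xD x s) i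

/-- `G0 = diag(I_{n0}, 0_{n1+n2})`. -/
def G0 : Matrix (Ix n0 n1 n2) (Ix n0 n1 n2) ℝ :=
  Matrix.of fun i j =>
    match i, j with
    | .inl i', .inl j' => if i' = j' then (1:ℝ) else 0
    | _, _ => 0

/-- `G2(s,θ) = [0_{n0×n_x}; T1(s−a) B_Q(θ)]`. -/
def G2 (s θ : ℝ) : Matrix (Ix n0 n1 n2) (Ix n0 n1 n2) ℝ :=
  Matrix.of fun i j =>
    match i with
    | .inl _ => (0:ℝ)
    | .inr i' => (T1mat n1 n2 (s - a) * BQ a b n0 n1 n2 B B_I θ) i' j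

/-- `G1(s,θ) = [0_{n0×n_x}; Q1(s−θ)] + G2(s,θ)`. -/
def G1 (s θ : ℝ) : Matrix (Ix n0 n1 n2) (Ix n0 n1 n2) ℝ :=
  (Matrix.of fun i j =>
    match i with
    | .inl _ => (0:ℝ)
    | .inr i' => Q1mat n0 n1 n2 (s - θ) i' j) + G2 a b n0 n1 n2 B B_I s θ

/-- The PI operator `𝒯`, acting on (representatives of) functions in `L2^{n_x}`:
`(𝒯v)(s) = G0 v(s) + ∫_a^s G1(s,θ) v(θ) dθ + ∫_s^b G2(s,θ) v(θ) dθ`. -/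
def Tfun (v : ℝ → Ix n0 n1 n2 → ℝ) (s : ℝ) : Ix n0 n1 n2 → ℝ := fun i =>
  (G0 n0 n1 n2).mulVec (v s) i
  + (∫ θ in a..s, (G1 a b n0 n1 n2 B B_I s θ).mulVec (v θ) i)
  + (∫ θ in s..b, (G2 a b n0 n1 n2 B B_I s θ).mulVec (v θ) i)

/-- `R_{D,2}(s,θ) = U2 T(s−a) B_Q(θ)`. -/
def RD2 (s θ : ℝ) : Matrix (ID n0 n1 n2) (Ix n0 n1 n2) ℝ :=
  U2 n0 n1 n2 * Tmat n1 n2 (s - a) * BQ a b n0 n1 n2 B B_I θ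

/-- `R_{D,1}(s,θ) = R_{D,2}(s,θ) + U2 Q(s−θ)`. -/
def RD1 (s θ : ℝ) : Matrix (ID n0 n1 n2) (Ix n0 n1 n2) ℝ :=
  RD2 a b n0 n1 n2 B B_I s θ + U2 n0 n1 n2 * Qmat n0 n1 n2 (s - θ)

end PIEpaper

namespace PIEpaper
variable (a b : ℝ) (n0 n1 n2 : ℕ)
variable (B : Matrix (Ic n1 n2) (Ic n1 n2 ⊕ Ic n1 n2) ℝ)
variable (B_I : ℝ → Matrix (Ic n1 n2) (ID n0 n1 n2) ℝ)

/-- The `L2[a,b]` norm of an `ℝ^ι`-valued function. -/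
def L2norm {ι : Type*} [Fintype ι] (f : ℝ → ι → ℝ) : ℝ :=
  Real.sqrt (∫ s in a..b, ∑ i, (f s i) ^ 2)

/-- The `L2[a,b]` inner product of two `ℝ^ι`-valued functions. -/
def L2inner {ι : Type*} [Fintype ι] (f g : ℝ → ι → ℝ) : ℝ :=
  ∫ s in a..b, ∑ i, f s i * g s i

variable (A0 : ℝ → Matrix (Ix n0 n1 n2) (ID n0 n1 n2) ℝ)
variable (A1 A2 : ℝ → ℝ → Matrix (Ix n0 n1 n2) (ID n0 n1 n2) ℝ)

/-- `Â0(s) = A0(s) U1`. -/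
def Ahat0 (s : ℝ) : Matrix (Ix n0 n1 n2) (Ix n0 n1 n2) ℝ := A0 s * U1 n0 n1 n2

/-- `Â1(s,θ)`. -/
def Ahat1 (s θ : ℝ) : Matrix (Ix n0 n1 n2) (Ix n0 n1 n2) ℝ :=
  A0 s * RD1 a b n0 n1 n2 B B_I s θ + A1 s θ * U1 n0 n1 n2
  + (Matrix.of fun i j => ∫ β in a..θ, (A1 s β * RD2 a b n0 n1 n2 B B_I β θ) i j)
  + (Matrix.of fun i j => ∫ β in θ..s, (A1 s β * RD1 a b n0 n1 n2 B B_I β θ) i j)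
  + (Matrix.of fun i j => ∫ β in s..b, (A2 s β * RD1 a b n0 n1 n2 B B_I β θ) i j)

/-- `Â2(s,θ)`. -/
def Ahat2 (s θ : ℝ) : Matrix (Ix n0 n1 n2) (Ix n0 n1 n2) ℝ :=
  A0 s * RD2 a b n0 n1 n2 B B_I s θ + A2 s θ * U1 n0 n1 n2
  + (Matrix.of fun i j => ∫ β in a..s, (A1 s β * RD2 a b n0 n1 n2 B B_I β θ) i j)
  + (Matrix.of fun i j => ∫ β in s..θ, (A2 s β * RD2 a b n0 n1 n2 B B_I β θ) i j)
  + (Matrix.of fun i j => ∫ β in θ..b, (A2 s β * RD1 a b n0 n1 n2 B B_I β θ) i j)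

/-- The PI operator `𝒜`:
`(𝒜v)(s) = Â0(s) v(s) + ∫_a^s Â1(s,θ) v(θ) dθ + ∫_s^b Â2(s,θ) v(θ) dθ`. -/
def Afun (v : ℝ → Ix n0 n1 n2 → ℝ) (s : ℝ) : Ix n0 n1 n2 → ℝ := fun i =>
  (Ahat0 n0 n1 n2 A0 s).mulVec (v s) i
  + (∫ θ in a..s, (Ahat1 a b n0 n1 n2 B B_I A0 A1 A2 s θ).mulVec (v θ) i)
  + (∫ θ in s..b, (Ahat2 a b n0 n1 n2 B B_I A0 A1 A2 s θ).mulVec (v θ) i)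

/-- The right-hand side of the PDE dynamics:
`A0(s) x_D(s) + ∫_a^s A1(s,θ) x_D(θ) dθ + ∫_s^b A2(s,θ) x_D(θ) dθ`. -/
def PDErhs (x : State a b n0 n1 n2) (s : ℝ) : Ix n0 n1 n2 → ℝ := fun i =>
  (A0 s).mulVec (xD x s) i
  + (∫ θ in a..s, (A1 s θ).mulVec (xD x θ) i)
  + (∫ θ in s..b, (A2 s θ).mulVec (xD x θ) i)

/-- `t ↦ u(t)` is Fréchet differentiable at `t` with respect to the `L2[a,b]` norm,
with derivative `g`. -/
def HasL2DerivAt (u : ℝ → ℝ → Ix n0 n1 n2 → ℝ) (g : ℝ → Ix n0 n1 n2 → ℝ) (t : ℝ) : Prop :=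
  Tendsto (fun h : ℝ =>
      L2norm a b (fun s i => (u (t + h) s i - u t s i) / h - g s i))
    (nhdsWithin 0 {0}ᶜ) (nhds 0)

/-- `t ↦ u(t)` is Fréchet differentiable at `t` with respect to the `𝒯`-norm
`v ↦ ‖𝒯v‖_{L2}`, with derivative `g`. -/
def HasTDerivAt (u : ℝ → ℝ → Ix n0 n1 n2 → ℝ) (g : ℝ → Ix n0 n1 n2 → ℝ) (t : ℝ) : Prop :=
  Tendsto (fun h : ℝ =>
      L2norm a b (Tfun a b n0 n1 n2 B B_I
        (fun s i => (u (t + h) s i - u t s i) / h - g s i)))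
    (nhdsWithin 0 {0}ᶜ) (nhds 0)

/-- `x : [0,∞) → W^n` satisfies the PDE defined by `{(n0,n1,n2), B, B_I, A0, A1, A2}` with
initial condition `x⁰ ∈ X`: `x(t) ∈ X` for all `t ≥ 0`, `x(0) = x⁰`, and for almost every
`t ≥ 0`, `x` is Fréchet differentiable (w.r.t. the `L2` norm) at `t` with derivative `ẋ(t)`
satisfying the dynamics for almost every `s ∈ [a,b]`. -/
def SatisfiesPDE (x : ℝ → State a b n0 n1 n2) (x0 : State a b n0 n1 n2) : Prop :=
  (∀ t, 0 ≤ t → BCholds a b n0 n1 n2 B B_I (x t)) ∧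
  (∀ᵐ s ∂(μab a b), ∀ i, xfun (x 0) s i = xfun x0 s i) ∧
  (∀ᵐ t ∂(volume.restrict (Set.Ici (0:ℝ))), ∃ g : ℝ → Ix n0 n1 n2 → ℝ,
    HasL2DerivAt a b n0 n1 n2 (fun τ => xfun (x τ)) g t ∧
    ∀ᵐ s ∂(μab a b), ∀ i, g s i = PDErhs a b n0 n1 n2 A0 A1 A2 (x t) s i)

/-- `x_f : [0,∞) → L2^{n_x}` satisfies the PIE defined by `{𝒯, 𝒜}` with initial condition
`x_f⁰ ∈ L2^{n_x}`: `x_f(t) ∈ L2` for all `t ≥ 0`, `x_f(0) = x_f⁰`, and for almost every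
`t ≥ 0`, `x_f` is Fréchet differentiable w.r.t. the `𝒯`-norm at `t` with derivative
`ẋ_f(t)` satisfying `𝒯 ẋ_f(t) = 𝒜 x_f(t)` for almost every `s ∈ [a,b]`. -/
def SatisfiesPIE (xf : ℝ → ℝ → Ix n0 n1 n2 → ℝ) (xf0 : ℝ → Ix n0 n1 n2 → ℝ) : Prop :=
  (∀ t, 0 ≤ t → MemLp (xf t) 2 (μab a b)) ∧
  (∀ᵐ s ∂(μab a b), ∀ i, xf 0 s i = xf0 s i) ∧
  (∀ᵐ t ∂(volume.restrict (Set.Ici (0:ℝ))), ∃ g : ℝ → Ix n0 n1 n2 → ℝ,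
    HasTDerivAt a b n0 n1 n2 B B_I xf g t ∧
    ∀ᵐ s ∂(μab a b), ∀ i,
      Tfun a b n0 n1 n2 B B_I g s i = Afun a b n0 n1 n2 B B_I A0 A1 A2 (xf t) s i)

/-- The `X`-norm `‖x‖_X = (Σ_{i=0}^2 ‖∂ₛ^i x_i‖²_{L2})^{1/2}`. -/
def normX (x : State a b n0 n1 n2) : ℝ :=
  Real.sqrt ((L2norm a b x.x0) ^ 2 + (L2norm a b x.dx1) ^ 2 + (L2norm a b x.ddx2) ^ 2)

/-- The Sobolev-type norm `‖x‖_H = Σ_{i=0}^2 Σ_{j=0}^i ‖∂ₛ^j x_i‖_{L2}`. -/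
def normH (x : State a b n0 n1 n2) : ℝ :=
  L2norm a b x.x0 + (L2norm a b x.x1 + L2norm a b x.dx1)
    + (L2norm a b x.x2 + L2norm a b x.dx2 + L2norm a b x.ddx2)

/-- The PDE defined by `{(n0,n1,n2), B, B_I, A0, A1, A2}` is exponentially stable. -/
def ExpStablePDE : Prop :=
  ∃ M > (0:ℝ), ∃ α > (0:ℝ), ∀ x0 : State a b n0 n1 n2, BCholds a b n0 n1 n2 B B_I x0 →
    ∀ x : ℝ → State a b n0 n1 n2, SatisfiesPDE a b n0 n1 n2 B B_I A0 A1 A2 x x0 →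
      ∀ t, 0 ≤ t → normH a b n0 n1 n2 (x t) ≤ M * normH a b n0 n1 n2 x0 * Real.exp (-α * t)

/-- The PIE defined by `{𝒯, 𝒜}` is exponentially stable. -/
def ExpStablePIE : Prop :=
  ∃ M > (0:ℝ), ∃ α > (0:ℝ), ∀ xf0 : ℝ → Ix n0 n1 n2 → ℝ, MemLp xf0 2 (μab a b) →
    ∀ xf : ℝ → ℝ → Ix n0 n1 n2 → ℝ,
      SatisfiesPIE a b n0 n1 n2 B B_I A0 A1 A2 xf xf0 →
      ∀ t, 0 ≤ t → L2norm a b (xf t) ≤ M * L2norm a b xf0 * Real.exp (-α * t)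

/-- The `X`-inner product `⟨u,w⟩_X = Σ_{i=0}^2 ⟨∂ₛ^i u_i, ∂ₛ^i w_i⟩_{L2}` of two
`ℝ^{n_x}`-valued functions, where the spatial derivatives of the `W_1`- and `W_2`-blocks
are taken classically (they exist a.e. for elements of `X`). -/
def XinnerF (u w : ℝ → Ix n0 n1 n2 → ℝ) : ℝ :=
  (∫ s in a..b, ∑ i : Fin n0, u s (Sum.inl i) * w s (Sum.inl i))
  + (∫ s in a..b, ∑ i : Fin n1,
      deriv (fun t => u t (Sum.inr (Sum.inl i))) s *
      deriv (fun t => w t (Sum.inr (Sum.inl i))) s)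
  + (∫ s in a..b, ∑ i : Fin n2,
      deriv (deriv (fun t => u t (Sum.inr (Sum.inr i)))) s *
      deriv (deriv (fun t => w t (Sum.inr (Sum.inr i)))) s)

/-- The `X`-distance between two elements of `X`, induced by the `X`-norm:
`‖u − v‖_X = ‖Du − Dv‖_{L2}`. -/
def distX (u v : State a b n0 n1 n2) : ℝ :=
  Real.sqrt (∫ s in a..b, ∑ i, (Dx u s i - Dx v s i) ^ 2)

end PIEpaper

/-!
Block by block, `𝒯` undoes the derivatives in the `X`-inner product. The first block of `𝒯v`
is `v₀`. On `[a,b]` the second block is `∫_a^s v₁` plus a constant and the third is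
`∫_a^s (s - θ) v₂(θ) dθ` plus an affine function of `s`, the constants being integrals of
`B_Q v` (finite because `B_Q` has square-integrable entries: `B_I` does, and the other terms of
`B_Q` are continuous). By the Lebesgue differentiation theorem, `∂ₛ(𝒯v)₁ = v₁` a.e. Integration
by parts for absolutely continuous functions turns the kernel term into the iterated primitive
`∫_a^s ∫_a^r v₂`, whose derivative `∫_a^s v₂` is continuous, so `∂ₛ²(𝒯v)₂ = v₂` a.e. as well.
-/

open Set intervalIntegral
open scoped Interval

theorem MeasureTheory.IntegrableOn.intervalIntegrable_of_mem_Icc {f : ℝ → ℝ} {a b p q : ℝ}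
    (hf : IntegrableOn f (Icc a b)) (hp : p ∈ Icc a b) (hq : q ∈ Icc a b) :
    IntervalIntegrable f volume p q :=
  (hf.mono_set (uIcc_subset_Icc hp hq)).intervalIntegrable

theorem integral_sub_mul_eq_integral_integral {f : ℝ → ℝ} {a t : ℝ}
    (hf : IntervalIntegrable f volume a t) :
    ∫ θ in a..t, (t - θ) * f θ = ∫ r in a..t, ∫ θ in a..r, f θ := by
  have hlin : AbsolutelyContinuousOnInterval (fun r => r - t) a t :=
    (contDiff_id.sub contDiff_const).contDiffOn.absolutelyContinuousOnInterval
  have hparts := hlin.integral_mul_deriv_eq_deriv_mul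
    (hf.absolutelyContinuousOnInterval_intervalIntegral left_mem_uIcc)
  have hderiv : ∫ r in a..t, (r - t) * deriv (fun r => ∫ θ in a..r, f θ) r
      = ∫ r in a..t, (r - t) * f r := by
    refine integral_congr_ae ?_
    filter_upwards [hf.ae_hasDerivAt_integral] with r hr hrI
    rw [(hr (uIoc_subset_uIcc hrI) a left_mem_uIcc).deriv]
  simp only [hderiv, deriv_sub_const, deriv_id'', one_mul, integral_same, sub_self,
    zero_mul, mul_zero, zero_sub] at hparts
  rw [← neg_neg (∫ r in a..t, ∫ θ in a..r, f θ), ← hparts, ← intervalIntegral.integral_neg]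
  exact integral_congr fun θ _ => by ring

theorem IntervalIntegrable.ae_hasDerivAt_of_eqOn_integral_add_const {f g : ℝ → ℝ} {a b c : ℝ}
    (hf : IntervalIntegrable f volume a b)
    (hg : EqOn g (fun s => (∫ θ in a..s, f θ) + c) (Ioo a b)) :
    ∀ᵐ s, s ∈ Ioo a b → HasDerivAt g (f s) s := by
  filter_upwards [hf.ae_hasDerivAt_integral] with s hs hsI
  have hprim := hs (Icc_subset_uIcc (Ioo_subset_Icc_self hsI)) a left_mem_uIcc
  exact (hprim.add_const c).congr_of_eventuallyEq
    (hg.eventuallyEq_of_mem (Ioo_mem_nhds hsI.1 hsI.2))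

theorem IntervalIntegrable.hasDerivAt_of_eqOn_integral_sub_mul {f g : ℝ → ℝ} {a b c d s : ℝ}
    (hf : IntervalIntegrable f volume a b)
    (hg : EqOn g (fun s => (∫ θ in a..s, (s - θ) * f θ) + (c + (s - a) * d)) (Ioo a b))
    (hs : s ∈ Ioo a b) :
    HasDerivAt g ((∫ θ in a..s, f θ) + d) s := by
  have hF : ContinuousOn (fun r => ∫ θ in a..r, f θ) (Icc a b) :=
    (continuousOn_primitive_interval' hf left_mem_uIcc).mono Icc_subset_uIcc
  have hg' : EqOn g (fun r => (∫ ρ in a..r, ∫ θ in a..ρ, f θ) + (c + (r - a) * d)) (Ioo a b) :=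
    fun r hr => by
      have hsub : uIcc a r ⊆ uIcc a b :=
        uIcc_subset_uIcc left_mem_uIcc (Icc_subset_uIcc (Ioo_subset_Icc_self hr))
      simp only [hg hr, integral_sub_mul_eq_integral_integral (hf.mono_set hsub)]
  have hprim : HasDerivAt (fun r => ∫ ρ in a..r, ∫ θ in a..ρ, f θ) (∫ θ in a..s, f θ) s :=
    integral_hasDerivAt_right
      ((hF.mono (Icc_subset_Icc_right hs.2.le)).intervalIntegrable_of_Icc hs.1.le)
      (ContinuousOn.stronglyMeasurableAtFilter isOpen_Ioo (hF.mono Ioo_subset_Icc_self) s hs)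
      (hF.continuousAt (Icc_mem_nhds hs.1 hs.2))
  have haffine : HasDerivAt (fun r => c + (r - a) * d) d s := by
    simpa using (((hasDerivAt_id s).sub_const a).mul_const d).const_add c
  exact (hprim.add haffine).congr_of_eventuallyEq
    (hg'.eventuallyEq_of_mem (Ioo_mem_nhds hs.1 hs.2))

theorem continuousOn_integral_add_sub_mul {g₀ g₁ : ℝ → ℝ} {a b : ℝ} (hab : a ≤ b)
    (h₀ : IntegrableOn g₀ (Icc a b)) (h₁ : IntegrableOn g₁ (Icc a b)) :
    ContinuousOn (fun θ => ∫ r in θ..b, (g₀ r + (r - θ) * g₁ r)) (Icc a b) := by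
  rw [← uIcc_of_le hab] at h₀ h₁ ⊢
  have hid₁ : IntegrableOn (fun r => r * g₁ r) (uIcc a b) :=
    h₁.continuousOn_mul continuousOn_id isCompact_uIcc
  refine ((continuousOn_primitive_interval_left (h₀.add hid₁)).sub
    (continuousOn_id.mul (continuousOn_primitive_interval_left h₁))).congr fun θ hθ => ?_
  have hsub : uIcc θ b ⊆ uIcc a b := uIcc_subset_uIcc hθ right_mem_uIcc
  have hi₀ := (h₀.mono_set hsub).intervalIntegrable
  have hi₁ := (h₁.mono_set hsub).intervalIntegrable
  have hid := (hid₁.mono_set hsub).intervalIntegrable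
  simp only [Pi.sub_apply, Pi.mul_apply, Pi.add_apply, id_eq]
  rw [← intervalIntegral.integral_const_mul, ← integral_sub (hi₀.add hid) (hi₁.const_mul θ)]
  exact integral_congr fun r _ => by ring

section MatrixLp

variable {α ι κ ν : Type*} [Fintype κ] [MeasurableSpace α] {μ : Measure α} {p : ENNReal}

theorem memLp_mul_const_apply {M : α → Matrix ι κ ℝ} (hM : ∀ i j, MemLp (fun t => M t i j) p μ)
    (C : Matrix κ ν ℝ) (i : ι) (j : ν) : MemLp (fun t => (M t * C) i j) p μ := by
  simp only [mul_apply]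
  exact memLp_finsetSum _ fun k _ => (hM i k).mul_const (C k j)

theorem memLp_const_mul_apply {M : α → Matrix κ ν ℝ} (C : Matrix ι κ ℝ)
    (hM : ∀ i j, MemLp (fun t => M t i j) p μ) (i : ι) (j : ν) :
    MemLp (fun t => (C * M t) i j) p μ := by
  simp only [mul_apply]
  exact memLp_finsetSum _ fun k _ => (hM k j).const_mul (C i k)

theorem integrable_mulVec_apply {M : α → Matrix ι κ ℝ} (hM : ∀ i j, MemLp (fun t => M t i j) 2 μ)
    {v : α → κ → ℝ} (hv : MemLp v 2 μ) (i : ι) : Integrable (fun t => (M t *ᵥ v t) i) μ := by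
  simp only [mulVec, dotProduct]
  exact integrable_finsetSum _ fun k _ => (hM i k).integrable_mul (hv.eval k)

end MatrixLp

namespace PIEpaper

section

variable {a b : ℝ} {n0 n1 n2 : ℕ} {B : Matrix (Ic n1 n2) (Ic n1 n2 ⊕ Ic n1 n2) ℝ}
  {B_I : ℝ → Matrix (Ic n1 n2) (ID n0 n1 n2) ℝ} {v x y : ℝ → Ix n0 n1 n2 → ℝ}

instance : IsFiniteMeasure (μab a b) := by
  unfold μab; infer_instance

theorem ae_mem_Ioo_of_mem_uIoc (hab : a ≤ b) : ∀ᵐ s, s ∈ Ι a b → s ∈ Ioo a b := by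
  filter_upwards [(Ioo_ae_eq_Ioc (μ := volume) (a := a) (b := b)).mem_iff] with s hs hsI
  exact hs.2 (uIoc_of_le hab ▸ hsI)

theorem memLp_μab_of_continuousOn {f : ℝ → ℝ} (hf : ContinuousOn f (Icc a b)) :
    MemLp f 2 (μab a b) := by
  obtain ⟨C, hC⟩ := isCompact_Icc.exists_bound_of_continuousOn hf
  exact MemLp.of_bound (hf.aestronglyMeasurable measurableSet_Icc) C
    ((ae_restrict_iff' measurableSet_Icc).2 (ae_of_all _ hC))

theorem intervalIntegrable_sum_mul_comp {ι κ : Type*} [Fintype ι] [Fintype κ] (hab : a ≤ b)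
    {f g : ℝ → ι → ℝ} (hf : MemLp f 2 (μab a b)) (hg : MemLp g 2 (μab a b)) (e : κ → ι) :
    IntervalIntegrable (fun s => ∑ k, f s (e k) * g s (e k)) volume a b :=
  (intervalIntegrable_iff_integrableOn_Icc_of_le hab).2 <|
    integrable_finsetSum _ fun k _ => (hf.eval (e k)).integrable_mul (hg.eval (e k))

theorem intervalIntegrable_of_memLp_μab (hab : a ≤ b) {f : ℝ → ℝ} (hf : MemLp f 2 (μab a b)) :
    IntervalIntegrable f volume a b :=
  (intervalIntegrable_iff_integrableOn_Icc_of_le hab).2 (hf.integrable one_le_two)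

theorem Qmat_eq_add_smul (η : ℝ) :
    Qmat n0 n1 n2 η = Qmat n0 n1 n2 0 + η • (Qmat n0 n1 n2 1 - Qmat n0 n1 n2 0) := by
  ext (i | i | i) (j | j | j) <;> simp [Qmat]

theorem continuous_Qmat : Continuous (Qmat n0 n1 n2) := by
  rw [funext Qmat_eq_add_smul]; fun_prop

theorem continuous_Qstack : Continuous (Qstack n0 n1 n2) :=
  continuous_pi fun i => continuous_pi fun j => by
    rcases i with _ | i
    · exact continuous_const
    · exact (continuous_apply_apply i j).comp continuous_Qmat

theorem memLp_BQ_apply (hab : a ≤ b) (hBI : SqIntMat a b B_I) (i : Ic n1 n2) (j : Ix n0 n1 n2) :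
    MemLp (fun s => BQ a b n0 n1 n2 B B_I s i j) 2 (μab a b) := by
  refine memLp_const_mul_apply _ (fun k l => ?_) i j
  simp only [Matrix.add_apply, Matrix.sub_apply, of_apply]
  have hboundary : Continuous fun s => (B * Qstack n0 n1 n2 (b - s)) k l :=
    (continuous_const.matrix_mul (continuous_Qstack.comp (continuous_sub_left b))).matrix_elem k l
  set g₀ := fun r => (B_I r * U2 n0 n1 n2 * Qmat n0 n1 n2 0) k l
  set g₁ := fun r => (B_I r * U2 n0 n1 n2 * (Qmat n0 n1 n2 1 - Qmat n0 n1 n2 0)) k l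
  have hkernel : ∀ s r,
      (B_I r * U2 n0 n1 n2 * Qmat n0 n1 n2 (r - s)) k l = g₀ r + (r - s) * g₁ r :=
    fun s r => by simp [g₀, g₁, Qmat_eq_add_smul (r - s), Matrix.mul_add]
  have hg : ∀ C : Matrix (Ic n1 n2) (Ix n0 n1 n2) ℝ,
      IntegrableOn (fun r => (B_I r * U2 n0 n1 n2 * C) k l) (Icc a b) :=
    fun C => (memLp_mul_const_apply (memLp_mul_const_apply hBI.2 _) C k l).integrable one_le_two
  simp only [hkernel]
  exact ((memLp_mul_const_apply hBI.2 _ k l).sub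
    (memLp_μab_of_continuousOn hboundary.continuousOn)).add
    (memLp_μab_of_continuousOn (continuousOn_integral_add_sub_mul hab (hg _) (hg _)))

theorem integrableOn_BQ_mulVec_apply (hab : a ≤ b) (hBI : SqIntMat a b B_I)
    (hv : MemLp v 2 (μab a b)) (j : Ic n1 n2) :
    IntegrableOn (fun θ => (BQ a b n0 n1 n2 B B_I θ *ᵥ v θ) j) (Icc a b) :=
  integrable_mulVec_apply (memLp_BQ_apply hab hBI) hv j

theorem G0_mulVec_inl (w : Ix n0 n1 n2 → ℝ) (i : Fin n0) :
    (G0 n0 n1 n2 *ᵥ w) (.inl i) = w (.inl i) := by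
  simp [G0, mulVec, dotProduct, Fintype.sum_sum_type]

theorem G0_mulVec_inr (w : Ix n0 n1 n2 → ℝ) (i : I12 n1 n2) :
    (G0 n0 n1 n2 *ᵥ w) (.inr i) = 0 := by
  simp [G0, mulVec, dotProduct]

theorem G2_mulVec_inl (s θ : ℝ) (w : Ix n0 n1 n2 → ℝ) (i : Fin n0) :
    (G2 a b n0 n1 n2 B B_I s θ *ᵥ w) (.inl i) = 0 := by
  simp [G2, mulVec, dotProduct]

theorem G1_mulVec_inl (s θ : ℝ) (w : Ix n0 n1 n2 → ℝ) (i : Fin n0) :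
    (G1 a b n0 n1 n2 B B_I s θ *ᵥ w) (.inl i) = 0 := by
  simp [G1, G2, mulVec, dotProduct]

theorem T1mat_mulVec_inl (η : ℝ) (u : Ic n1 n2 → ℝ) (i : Fin n1) :
    (T1mat n1 n2 η *ᵥ u) (.inl i) = u (.inl i) := by
  simp [T1mat, Tmat, emb12, mulVec, dotProduct, Fintype.sum_sum_type]

theorem T1mat_mulVec_inr (η : ℝ) (u : Ic n1 n2 → ℝ) (k : Fin n2) :
    (T1mat n1 n2 η *ᵥ u) (.inr k) = u (.inr (.inl k)) + η * u (.inr (.inr k)) := by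
  simp [T1mat, Tmat, emb12, mulVec, dotProduct, Fintype.sum_sum_type]

theorem G2_mulVec_inr (s θ : ℝ) (w : Ix n0 n1 n2 → ℝ) (i : I12 n1 n2) :
    (G2 a b n0 n1 n2 B B_I s θ *ᵥ w) (.inr i)
      = (T1mat n1 n2 (s - a) *ᵥ (BQ a b n0 n1 n2 B B_I θ *ᵥ w)) i := by
  rw [mulVec_mulVec]; rfl

theorem G2_mulVec_inr_inl (s θ : ℝ) (w : Ix n0 n1 n2 → ℝ) (i : Fin n1) :
    (G2 a b n0 n1 n2 B B_I s θ *ᵥ w) (.inr (.inl i))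
      = (BQ a b n0 n1 n2 B B_I θ *ᵥ w) (.inl i) := by
  rw [G2_mulVec_inr, T1mat_mulVec_inl]

theorem G2_mulVec_inr_inr (s θ : ℝ) (w : Ix n0 n1 n2 → ℝ) (k : Fin n2) :
    (G2 a b n0 n1 n2 B B_I s θ *ᵥ w) (.inr (.inr k))
      = (BQ a b n0 n1 n2 B B_I θ *ᵥ w) (.inr (.inl k))
        + (s - a) * (BQ a b n0 n1 n2 B B_I θ *ᵥ w) (.inr (.inr k)) := by
  rw [G2_mulVec_inr, T1mat_mulVec_inr]

theorem G1_mulVec_inr_inl (s θ : ℝ) (w : Ix n0 n1 n2 → ℝ) (i : Fin n1) :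
    (G1 a b n0 n1 n2 B B_I s θ *ᵥ w) (.inr (.inl i))
      = w (.inr (.inl i)) + (BQ a b n0 n1 n2 B B_I θ *ᵥ w) (.inl i) := by
  rw [G1, add_mulVec, Pi.add_apply, G2_mulVec_inr_inl]
  simp [mulVec, dotProduct, Q1mat, Qmat, emb12, Fintype.sum_sum_type]

theorem G1_mulVec_inr_inr (s θ : ℝ) (w : Ix n0 n1 n2 → ℝ) (k : Fin n2) :
    (G1 a b n0 n1 n2 B B_I s θ *ᵥ w) (.inr (.inr k))
      = (s - θ) * w (.inr (.inr k)) + ((BQ a b n0 n1 n2 B B_I θ *ᵥ w) (.inr (.inl k))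
        + (s - a) * (BQ a b n0 n1 n2 B B_I θ *ᵥ w) (.inr (.inr k))) := by
  rw [G1, add_mulVec, Pi.add_apply, G2_mulVec_inr_inr]
  simp [mulVec, dotProduct, Q1mat, Qmat, emb12, Fintype.sum_sum_type]

theorem Tfun_inl (s : ℝ) (i : Fin n0) : Tfun a b n0 n1 n2 B B_I v s (.inl i) = v s (.inl i) := by
  simp only [Tfun, G0_mulVec_inl, G1_mulVec_inl, G2_mulVec_inl, intervalIntegral.integral_zero,
    add_zero]

theorem Tfun_inr_inl (hab : a ≤ b) (hBI : SqIntMat a b B_I) (hv : MemLp v 2 (μab a b))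
    {s : ℝ} (hs : s ∈ Icc a b) (i : Fin n1) :
    Tfun a b n0 n1 n2 B B_I v s (.inr (.inl i))
      = (∫ θ in a..s, v θ (.inr (.inl i)))
        + ∫ θ in a..b, (BQ a b n0 n1 n2 B B_I θ *ᵥ v θ) (.inl i) := by
  have ha : a ∈ Icc a b := left_mem_Icc.2 hab
  have hb : b ∈ Icc a b := right_mem_Icc.2 hab
  have hv₁ : IntegrableOn (fun θ => v θ (.inr (.inl i))) (Icc a b) :=
    (hv.eval _).integrable one_le_two
  have hc := integrableOn_BQ_mulVec_apply (B := B) hab hBI hv (.inl i)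
  simp only [Tfun, G0_mulVec_inr, G1_mulVec_inr_inl, G2_mulVec_inr_inl, zero_add]
  rw [intervalIntegral.integral_add (hv₁.intervalIntegrable_of_mem_Icc ha hs)
      (hc.intervalIntegrable_of_mem_Icc ha hs),
    add_assoc, integral_add_adjacent_intervals (hc.intervalIntegrable_of_mem_Icc ha hs)
      (hc.intervalIntegrable_of_mem_Icc hs hb)]

theorem Tfun_inr_inr (hab : a ≤ b) (hBI : SqIntMat a b B_I) (hv : MemLp v 2 (μab a b))
    {s : ℝ} (hs : s ∈ Icc a b) (k : Fin n2) :
    Tfun a b n0 n1 n2 B B_I v s (.inr (.inr k))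
      = (∫ θ in a..s, (s - θ) * v θ (.inr (.inr k)))
        + ((∫ θ in a..b, (BQ a b n0 n1 n2 B B_I θ *ᵥ v θ) (.inr (.inl k)))
          + (s - a) * ∫ θ in a..b, (BQ a b n0 n1 n2 B B_I θ *ᵥ v θ) (.inr (.inr k))) := by
  have ha : a ∈ Icc a b := left_mem_Icc.2 hab
  have hb : b ∈ Icc a b := right_mem_Icc.2 hab
  have hv₂ : IntegrableOn (fun θ => (s - θ) * v θ (.inr (.inr k))) (Icc a b) :=
    IntegrableOn.continuousOn_mul (by fun_prop) ((hv.eval _).integrable one_le_two) isCompact_Icc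
  have hc₁ := integrableOn_BQ_mulVec_apply (B := B) hab hBI hv (.inr (.inl k))
  have hc₂ := integrableOn_BQ_mulVec_apply (B := B) hab hBI hv (.inr (.inr k))
  have hc : IntegrableOn (fun θ => (BQ a b n0 n1 n2 B B_I θ *ᵥ v θ) (.inr (.inl k))
      + (s - a) * (BQ a b n0 n1 n2 B B_I θ *ᵥ v θ) (.inr (.inr k))) (Icc a b) :=
    hc₁.add (hc₂.const_mul (s - a))
  simp only [Tfun, G0_mulVec_inr, G1_mulVec_inr_inr, G2_mulVec_inr_inr, zero_add]
  rw [intervalIntegral.integral_add (hv₂.intervalIntegrable_of_mem_Icc ha hs)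
      (hc.intervalIntegrable_of_mem_Icc ha hs),
    add_assoc, integral_add_adjacent_intervals (hc.intervalIntegrable_of_mem_Icc ha hs)
      (hc.intervalIntegrable_of_mem_Icc hs hb),
    intervalIntegral.integral_add (hc₁.intervalIntegrable_of_mem_Icc ha hb)
      ((hc₂.intervalIntegrable_of_mem_Icc ha hb).const_mul _), intervalIntegral.integral_const_mul]

theorem ae_deriv_Tfun_inr_inl (hab : a ≤ b) (hBI : SqIntMat a b B_I) (hv : MemLp v 2 (μab a b))
    (i : Fin n1) :
    ∀ᵐ s, s ∈ Ioo a b →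
      deriv (fun t => Tfun a b n0 n1 n2 B B_I v t (.inr (.inl i))) s = v s (.inr (.inl i)) := by
  have hv₁ := intervalIntegrable_of_memLp_μab hab (hv.eval (.inr (.inl i)))
  filter_upwards [hv₁.ae_hasDerivAt_of_eqOn_integral_add_const
    fun s hs => Tfun_inr_inl (B := B) hab hBI hv (Ioo_subset_Icc_self hs) i] with s hs hsI
  exact (hs hsI).deriv

theorem ae_deriv_deriv_Tfun_inr_inr (hab : a ≤ b) (hBI : SqIntMat a b B_I)
    (hv : MemLp v 2 (μab a b)) (k : Fin n2) :
    ∀ᵐ s, s ∈ Ioo a b →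
      deriv (deriv fun t => Tfun a b n0 n1 n2 B B_I v t (.inr (.inr k))) s
        = v s (.inr (.inr k)) := by
  have hv₂ := intervalIntegrable_of_memLp_μab hab (hv.eval (.inr (.inr k)))
  have hderiv : EqOn (deriv fun t => Tfun a b n0 n1 n2 B B_I v t (.inr (.inr k)))
      (fun s => (∫ θ in a..s, v θ (.inr (.inr k)))
        + ∫ θ in a..b, (BQ a b n0 n1 n2 B B_I θ *ᵥ v θ) (.inr (.inr k))) (Ioo a b) :=
    fun s hs => (hv₂.hasDerivAt_of_eqOn_integral_sub_mul
      (fun t ht => Tfun_inr_inr hab hBI hv (Ioo_subset_Icc_self ht) k) hs).deriv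
  filter_upwards [hv₂.ae_hasDerivAt_of_eqOn_integral_add_const hderiv] with s hs hsI
  exact (hs hsI).deriv

theorem integral_sum_deriv_mul_deriv_Tfun_inr_inl (hab : a ≤ b) (hBI : SqIntMat a b B_I)
    (hx : MemLp x 2 (μab a b)) (hy : MemLp y 2 (μab a b)) :
    ∫ s in a..b, ∑ i : Fin n1,
        deriv (fun t => Tfun a b n0 n1 n2 B B_I x t (.inr (.inl i))) s *
          deriv (fun t => Tfun a b n0 n1 n2 B B_I y t (.inr (.inl i))) s
      = ∫ s in a..b, ∑ i : Fin n1, x s (.inr (.inl i)) * y s (.inr (.inl i)) := by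
  refine integral_congr_ae ?_
  filter_upwards [ae_mem_Ioo_of_mem_uIoc hab,
    ae_all_iff.2 fun i => ae_deriv_Tfun_inr_inl (B := B) hab hBI hx i,
    ae_all_iff.2 fun i => ae_deriv_Tfun_inr_inl (B := B) hab hBI hy i] with s hs hxs hys hsI
  simp only [hxs _ (hs hsI), hys _ (hs hsI)]

theorem integral_sum_deriv_deriv_mul_deriv_deriv_Tfun_inr_inr (hab : a ≤ b)
    (hBI : SqIntMat a b B_I) (hx : MemLp x 2 (μab a b)) (hy : MemLp y 2 (μab a b)) :
    ∫ s in a..b, ∑ k : Fin n2,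
        deriv (deriv fun t => Tfun a b n0 n1 n2 B B_I x t (.inr (.inr k))) s *
          deriv (deriv fun t => Tfun a b n0 n1 n2 B B_I y t (.inr (.inr k))) s
      = ∫ s in a..b, ∑ k : Fin n2, x s (.inr (.inr k)) * y s (.inr (.inr k)) := by
  refine integral_congr_ae ?_
  filter_upwards [ae_mem_Ioo_of_mem_uIoc hab,
    ae_all_iff.2 fun k => ae_deriv_deriv_Tfun_inr_inr (B := B) hab hBI hx k,
    ae_all_iff.2 fun k => ae_deriv_deriv_Tfun_inr_inr (B := B) hab hBI hy k] with s hs hxs hys hsI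
  simp only [hxs _ (hs hsI), hys _ (hs hsI)]

end

theorem T_unitary (a b : ℝ) (hab : a < b) (n0 n1 n2 : ℕ)
    (B : Matrix (Ic n1 n2) (Ic n1 n2 ⊕ Ic n1 n2) ℝ)
    (B_I : ℝ → Matrix (Ic n1 n2) (ID n0 n1 n2) ℝ)
    (hBI : SqIntMat a b B_I)
    (x y : ℝ → Ix n0 n1 n2 → ℝ)
    (hx : MemLp x 2 (μab a b))
    (hy : MemLp y 2 (μab a b)) :
    XinnerF a b n0 n1 n2 (Tfun a b n0 n1 n2 B B_I x) (Tfun a b n0 n1 n2 B B_I y)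
      = L2inner a b x y := by
  have h₀ := intervalIntegrable_sum_mul_comp hab.le hx hy (Sum.inl : Fin n0 → Ix n0 n1 n2)
  have h₁ := intervalIntegrable_sum_mul_comp hab.le hx hy (fun i : Fin n1 => Sum.inr (Sum.inl i))
  have h₂ := intervalIntegrable_sum_mul_comp hab.le hx hy (fun k : Fin n2 => Sum.inr (Sum.inr k))
  rw [XinnerF, L2inner, integral_sum_deriv_mul_deriv_Tfun_inr_inl hab.le hBI hx hy,
    integral_sum_deriv_deriv_mul_deriv_deriv_Tfun_inr_inr hab.le hBI hx hy]
  simp only [Tfun_inl]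
  rw [← intervalIntegral.integral_add h₀ h₁, ← intervalIntegral.integral_add (h₀.add h₁) h₂]
  simp [Fintype.sum_sum_type, add_assoc]

end PIEpaper
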